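/- The interlace polynomial is invariant under pivoting: for any finite simple graph G and edge ab, q(G^{ab}) = q(G). -/

import Mathlib

/-- The pair `x, y` lies in different classes among (neighbors of `a` only,
neighbors of `b` only, neighbors of both), with both distinct from `a` and `b`. -/
def togglePair {V : Type} (G : SimpleGraph V) (a b x y : V) : Prop :=
  (x ≠ a ∧ x ≠ b ∧ y ≠ a ∧ y ≠ b) ∧
  (G.Adj a x ∨ G.Adj b x) ∧ (G.Adj a y ∨ G.Adj b y) ∧
  ¬((G.Adj a x ↔ G.Adj a y) ∧ (G.Adj b x ↔ G.Adj b y))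

lemma togglePair_comm {V : Type} (G : SimpleGraph V) (a b x y : V) :
    togglePair G a b x y ↔ togglePair G a b y x := by
  unfold togglePair; tauto

/-- The pivot `G^{ab}`: toggle the adjacency of every pair of vertices (distinct
from `a`, `b`) lying in different classes among (neighbors of `a` only,
neighbors of `b` only, neighbors of both); all other adjacencies unchanged. -/
def pivot {V : Type} (G : SimpleGraph V) (a b : V) : SimpleGraph V where
  Adj x y := (togglePair G a b x y ∧ x ≠ y ∧ ¬ G.Adj x y) ∨
    (¬ togglePair G a b x y ∧ G.Adj x y)
  symm := by
    constructor
    intro x y h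
    rcases h with ⟨ht, hxy, hna⟩ | ⟨ht, ha⟩
    · exact Or.inl ⟨(togglePair_comm G a b x y).mp ht, hxy.symm,
        fun h => hna h.symm⟩
    · exact Or.inr ⟨fun h => ht ((togglePair_comm G a b y x).mp h), ha.symm⟩
  loopless := by
    constructor
    intro x h
    rcases h with ⟨_, hxy, _⟩ | ⟨_, ha⟩
    · exact hxy rfl
    · exact G.loopless.irrefl x ha

/-- Deletion of the vertex `a` from `G`. -/
def delVert {V : Type} (G : SimpleGraph V) (a : V) : SimpleGraph {v : V // v ≠ a} :=
  G.comap (fun v => v.1)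

/-- `q` is an interlace polynomial map: invariant under graph isomorphism,
satisfying the pivot-deletion recursion `q(G) = q(G-a) + q(G^{ab}-b)` for every
edge `ab`, and equal to `x^n` on the edgeless graph on `n` vertices. -/
def IsInterlacePoly
    (q : ∀ (V : Type) [Fintype V] [DecidableEq V], SimpleGraph V → Polynomial ℤ) : Prop :=
  (∀ (V W : Type) [Fintype V] [DecidableEq V] [Fintype W] [DecidableEq W]
      (G : SimpleGraph V) (H : SimpleGraph W), Nonempty (G ≃g H) → q V G = q W H) ∧
  (∀ (V : Type) [Fintype V] [DecidableEq V] (G : SimpleGraph V) (a b : V), G.Adj a b →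
      q V G = q {v : V // v ≠ a} (delVert G a) +
        q {v : V // v ≠ b} (delVert (pivot G a b) b)) ∧
  (∀ (V : Type) [Fintype V] [DecidableEq V],
      q V (⊥ : SimpleGraph V) = Polynomial.X ^ (Fintype.card V))


lemma pivot_adj_a {V : Type} (G : SimpleGraph V) (a b x : V) :
    (pivot G a b).Adj a x ↔ G.Adj a x := by
  simp [pivot, togglePair]

lemma pivot_adj_b {V : Type} (G : SimpleGraph V) (a b x : V) :
    (pivot G a b).Adj b x ↔ G.Adj b x := by
  simp [pivot, togglePair]

lemma togglePair_pivot {V : Type} (G : SimpleGraph V) (a b x y : V) :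
    togglePair (pivot G a b) a b x y ↔ togglePair G a b x y := by
  unfold togglePair
  rw [pivot_adj_a, pivot_adj_a, pivot_adj_b, pivot_adj_b]

lemma pivot_adj_iff {V : Type} (G : SimpleGraph V) (a b x y : V) :
    (pivot G a b).Adj x y ↔
      (togglePair G a b x y ∧ x ≠ y ∧ ¬ G.Adj x y) ∨
      (¬ togglePair G a b x y ∧ G.Adj x y) := Iff.rfl

lemma pivot_pivot {V : Type} (G : SimpleGraph V) (a b : V) :
    pivot (pivot G a b) a b = G := by
  ext x y
  rw [pivot_adj_iff, pivot_adj_iff, togglePair_pivot]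
  by_cases hne : x = y
  · subst hne; simp
  · tauto

lemma pivot_comm' {V : Type} (G : SimpleGraph V) (a b : V) :
    pivot G a b = pivot G b a := by
  ext x y
  have : togglePair G a b x y ↔ togglePair G b a x y := by unfold togglePair; tauto
  simp only [pivot]
  tauto

theorem interlacePoly_pivot_invariant
    (q : ∀ (V : Type) [Fintype V] [DecidableEq V], SimpleGraph V → Polynomial ℤ)
    (hq : IsInterlacePoly q)
    {V : Type} [Fintype V] [DecidableEq V] (G : SimpleGraph V) (a b : V)
    (hab : G.Adj a b) :
    q V (pivot G a b) = q V G := by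
  have hadj : (pivot G a b).Adj a b := (pivot_adj_a G a b b).mpr hab
  have h1 := hq.2.1 V G b a hab.symm
  have h2 := hq.2.1 V (pivot G a b) a b hadj
  rw [pivot_pivot] at h2
  rw [pivot_comm' G b a] at h1
  rw [h1, h2, add_comm]
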